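/- arXiv:1405.5737 — 2 statements merged into one kernel-verified Lean document; each statement's English description precedes it below -/
import Mathlib

section
/- Let A be an n×n real symmetric matrix with nonnegative entries and zero diagonal, and let D be the diagonal matrix with D_ii = ∑_j A_ij. Let P ⊆ {1,…,n} be a subset with complement Pᶜ, and let v_r = ∑_{i∈P} D_ii and v_l = ∑_{i∈Pᶜ} D_ii be the volumes of the two partitions, assumed positive. Define the indicator vector y by y_i = v_l if i ∈ P and y_i = −v_r if i ∈ Pᶜ. Then yᵀDy > 0 and yᵀ(D−A)y / (yᵀDy) = (∑_{i∈P} ∑_{j∈Pᶜ} A_ij)·(1/v_r + 1/v_l); i.e., the Rayleigh quotient of the indicator vector equals the normalized cut (NCut) objective of the bipartition. -/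
open BigOperators Matrix

/-!
For symmetric weights `A` with degrees `dᵢ = ∑ⱼ Aᵢⱼ`, the Laplacian quadratic form is
`2 yᵀ(D - A)y = ∑ᵢ ∑ⱼ Aᵢⱼ (yᵢ - yⱼ)²`. For the two-valued indicator vector only the pairs crossing
the cut contribute, each with weight `(v_l + v_r)²`, so `yᵀ(D - A)y = cut(P) (v_r + v_l)²`, while
`yᵀDy = v_l² v_r + v_r² v_l = v_r v_l (v_r + v_l)`.
-/

namespace Matrix

variable {ι R : Type*} [Fintype ι] [DecidableEq ι] [CommRing R]

theorem dotProduct_diagonal_mulVec (d y : ι → R) :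
    y ⬝ᵥ diagonal d *ᵥ y = ∑ i, d i * y i ^ 2 := by
  simp only [mulVec_diagonal, dotProduct]
  exact Finset.sum_congr rfl fun i _ => by ring

theorem two_mul_dotProduct_laplacian_mulVec {A : Matrix ι ι R} (hA : A.IsSymm) (y : ι → R) :
    2 * (y ⬝ᵥ (diagonal (fun i => ∑ j, A i j) - A) *ᵥ y) =
      ∑ i, ∑ j, A i j * (y i - y j) ^ 2 := by
  have hcol : ∑ i, ∑ j, A i j * y j ^ 2 = ∑ i, (∑ j, A i j) * y i ^ 2 := by
    rw [Finset.sum_comm]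
    simp only [Finset.sum_mul]
    exact Finset.sum_congr rfl fun i _ => Finset.sum_congr rfl fun j _ => by rw [hA.apply i j]
  symm
  calc ∑ i, ∑ j, A i j * (y i - y j) ^ 2
      = ∑ i, ∑ j, (A i j * y i ^ 2 + A i j * y j ^ 2 - 2 * (y i * (A i j * y j))) :=
        Finset.sum_congr rfl fun i _ => Finset.sum_congr rfl fun j _ => by ring
    _ = ∑ i, (∑ j, A i j) * y i ^ 2 + ∑ i, ∑ j, A i j * y j ^ 2
          - 2 * ∑ i, ∑ j, y i * (A i j * y j) := by
        simp only [Finset.sum_add_distrib, Finset.sum_sub_distrib, Finset.sum_mul, Finset.mul_sum]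
    _ = 2 * (y ⬝ᵥ (diagonal (fun i => ∑ j, A i j) - A) *ᵥ y) := by
        have hquad : y ⬝ᵥ A *ᵥ y = ∑ i, ∑ j, y i * (A i j * y j) := by
          simp only [dotProduct, mulVec, Finset.mul_sum]
        rw [hcol, sub_mulVec, dotProduct_sub, dotProduct_diagonal_mulVec, hquad]
        ring

theorem IsSymm.sum_compl_sum_eq_sum_sum_compl {A : Matrix ι ι R} (hA : A.IsSymm)
    (P : Finset ι) : ∑ i ∈ Pᶜ, ∑ j ∈ P, A i j = ∑ i ∈ P, ∑ j ∈ Pᶜ, A i j :=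
  Finset.sum_comm.trans <|
    Finset.sum_congr rfl fun i _ => Finset.sum_congr rfl fun j _ => hA.apply i j

end Matrix

section TwoValued

variable {ι R : Type*} [Fintype ι] [DecidableEq ι] [CommRing R]
  {P : Finset ι} {a b : R} {y : ι → R}

theorem sum_mul_sq_of_eq_ite (hy : ∀ i, y i = if i ∈ P then a else b) (d : ι → R) :
    ∑ i, d i * y i ^ 2 = a ^ 2 * ∑ i ∈ P, d i + b ^ 2 * ∑ i ∈ Pᶜ, d i := by
  rw [← Finset.sum_add_sum_compl P, Finset.mul_sum, Finset.mul_sum]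
  congr 1 <;> refine Finset.sum_congr rfl fun i hi => ?_
  · rw [hy, if_pos hi, mul_comm]
  · rw [hy, if_neg (Finset.mem_compl.mp hi), mul_comm]

theorem sum_sum_mul_sub_sq_of_eq_ite (hy : ∀ i, y i = if i ∈ P then a else b)
    (A : Matrix ι ι R) :
    ∑ i, ∑ j, A i j * (y i - y j) ^ 2 =
      (a - b) ^ 2 * (∑ i ∈ P, ∑ j ∈ Pᶜ, A i j + ∑ i ∈ Pᶜ, ∑ j ∈ P, A i j) := by
  have hP : ∀ i ∈ P, y i = a := fun i hi => by rw [hy, if_pos hi]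
  have hPc : ∀ i ∈ Pᶜ, y i = b := fun i hi => by rw [hy, if_neg (Finset.mem_compl.mp hi)]
  have block : ∀ (s t : Finset ι) (u v : R), (∀ i ∈ s, y i = u) → (∀ j ∈ t, y j = v) →
      ∑ i ∈ s, ∑ j ∈ t, A i j * (y i - y j) ^ 2 = (u - v) ^ 2 * ∑ i ∈ s, ∑ j ∈ t, A i j := by
    intro s t u v hs ht
    simp only [Finset.mul_sum]
    exact Finset.sum_congr rfl fun i hi => Finset.sum_congr rfl fun j hj => by
      rw [hs i hi, ht j hj, mul_comm]
  simp only [← Finset.sum_add_sum_compl P, Finset.sum_add_distrib]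
  rw [block P P a a hP hP, block P Pᶜ a b hP hPc, block Pᶜ P b a hPc hP,
    block Pᶜ Pᶜ b b hPc hPc]
  ring

end TwoValued

theorem rayleigh_quotient_eq_ncut_general (n : ℕ) (A : Matrix (Fin n) (Fin n) ℝ)
    (hsym : A.IsSymm)
    (d : Fin n → ℝ) (hd : ∀ i, d i = ∑ j, A i j)
    (D : Matrix (Fin n) (Fin n) ℝ) (hD : D = Matrix.diagonal d)
    (P : Finset (Fin n))
    (vr vl : ℝ) (hvr : vr = ∑ i ∈ P, d i) (hvl : vl = ∑ i ∈ Pᶜ, d i)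
    (hvrpos : 0 < vr) (hvlpos : 0 < vl)
    (y : Fin n → ℝ) (hy : ∀ i, y i = if i ∈ P then vl else -vr) :
    0 < y ⬝ᵥ D.mulVec y ∧
    (y ⬝ᵥ (D - A).mulVec y) / (y ⬝ᵥ D.mulVec y) =
      (∑ i ∈ P, ∑ j ∈ Pᶜ, A i j) * (1 / vr + 1 / vl) := by
  have hden : y ⬝ᵥ D *ᵥ y = vr * vl * (vr + vl) := by
    rw [hD, dotProduct_diagonal_mulVec, sum_mul_sq_of_eq_ite hy, ← hvr, ← hvl]
    ring
  have hnum : y ⬝ᵥ (D - A) *ᵥ y = (∑ i ∈ P, ∑ j ∈ Pᶜ, A i j) * (vr + vl) ^ 2 := by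
    have h := two_mul_dotProduct_laplacian_mulVec hsym y
    rw [sum_sum_mul_sub_sq_of_eq_ite hy, hsym.sum_compl_sum_eq_sum_sum_compl, ← funext hd,
      ← hD] at h
    linear_combination h / 2
  refine ⟨by rw [hden]; positivity, ?_⟩
  rw [hnum, hden]
  field_simp
  ring

/-- The Rayleigh quotient of the NCut indicator vector `y` (with `y i = v_l` on `P` and
`y i = -v_r` on `Pᶜ`) with respect to the pencil `(D - A, D)` equals the normalized cut
objective `(∑_{i∈P, j∈Pᶜ} A i j) * (1/v_r + 1/v_l)`. -/
theorem rayleigh_quotient_eq_ncut (n : ℕ) (A : Matrix (Fin n) (Fin n) ℝ)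
    (hsym : A.IsSymm) (hnn : ∀ i j, 0 ≤ A i j) (hdiag : ∀ i, A i i = 0)
    (d : Fin n → ℝ) (hd : ∀ i, d i = ∑ j, A i j)
    (D : Matrix (Fin n) (Fin n) ℝ) (hD : D = Matrix.diagonal d)
    (P : Finset (Fin n))
    (vr vl : ℝ) (hvr : vr = ∑ i ∈ P, d i) (hvl : vl = ∑ i ∈ Pᶜ, d i)
    (hvrpos : 0 < vr) (hvlpos : 0 < vl)
    (y : Fin n → ℝ) (hy : ∀ i, y i = if i ∈ P then vl else -vr) :
    0 < y ⬝ᵥ D.mulVec y ∧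
    (y ⬝ᵥ (D - A).mulVec y) / (y ⬝ᵥ D.mulVec y) =
      (∑ i ∈ P, ∑ j ∈ Pᶜ, A i j) * (1 / vr + 1 / vl) :=
  rayleigh_quotient_eq_ncut_general n A hsym d hd D hD P vr vl hvr hvl hvrpos hvlpos y hy
end

section
/- Let A be an n×n real symmetric matrix with nonnegative entries and zero diagonal, let D be the diagonal matrix with D_ii = ∑_j A_ij, assume D_ii > 0 for all i, and let L_s = D^{-1/2}(D−A)D^{-1/2} with eigenvalues listed in nondecreasing order with multiplicity μ₀ ≤ μ₁ ≤ … ≤ μ_{n−1}. Then for every subset P ⊆ {1,…,n} with v_r = ∑_{i∈P} D_ii > 0 and v_l = ∑_{i∉P} D_ii > 0, the second smallest eigenvalue satisfies μ₁ ≤ (∑_{i∈P} ∑_{j∉P} A_ij)·(1/v_r + 1/v_l); i.e., the algebraic connectivity λ_{n−1} of the graph is a lower bound for the normalized cut objective of every bipartition. -/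
open BigOperators Matrix

/-!
Test the Rayleigh quotient of `L_s` at `x = D^{1/2} g`, where `g` is `1 / v_r` on `P` and
`-1 / v_l` off `P`. This `x` is orthogonal to the kernel vector `D^{1/2} 𝟙` of `L_s`, has
`‖x‖² = 1 / v_r + 1 / v_l`, and `xᵀ L_s x = gᵀ (D - A) g = (∑_{i ∈ P, j ∉ P} A_ij) · ‖x‖⁴`.
Expanding in the orthonormal eigenbasis, `μ₁` bounds the Rayleigh quotient from below on the
orthogonal complement of the first eigenvector `v₀`. Since `v₀` need not be `D^{1/2} 𝟙`, one
passes to a combination of `x` and `D^{1/2} 𝟙` orthogonal to `v₀`, whose Rayleigh quotient is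
no larger.
-/

section Eigenbasis

variable {ι : Type*} [Fintype ι] [DecidableEq ι] {v : ι → ι → ℝ}

theorem sum_dotProduct_smul_eq_of_orthonormal
    (hv : ∀ k l, v k ⬝ᵥ v l = if k = l then (1 : ℝ) else 0) (y : ι → ℝ) :
    ∑ k, (v k ⬝ᵥ y) • v k = y := by
  have hVV : of v * (of v)ᵀ = 1 := by
    ext k l
    simpa [mul_apply, one_apply, dotProduct] using hv k l
  calc ∑ k, (v k ⬝ᵥ y) • v k = ((of v)ᵀ * of v) *ᵥ y := by
        ext i
        simp only [Finset.sum_apply, Pi.smul_apply, smul_eq_mul, mulVec, dotProduct,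
          mul_apply, transpose_apply, of_apply, Finset.sum_mul]
        rw [Finset.sum_comm]
        exact Finset.sum_congr rfl fun k _ => Finset.sum_congr rfl fun j _ => by ring
    _ = y := by rw [mul_eq_one_comm.mp hVV, one_mulVec]

theorem le_dotProduct_mulVec_of_orthonormal_eigenvectors {M : Matrix ι ι ℝ} {μ : ι → ℝ}
    (hv : ∀ k l, v k ⬝ᵥ v l = if k = l then (1 : ℝ) else 0)
    (hev : ∀ k, M *ᵥ v k = μ k • v k) {c : ℝ} {y : ι → ℝ}
    (hy : ∀ k, c ≤ μ k ∨ v k ⬝ᵥ y = 0) :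
    c * (y ⬝ᵥ y) ≤ y ⬝ᵥ M *ᵥ y := by
  have hexp := sum_dotProduct_smul_eq_of_orthonormal hv y
  have hMy : M *ᵥ y = ∑ k, (μ k * (v k ⬝ᵥ y)) • v k := by
    conv_lhs => rw [← hexp]
    simp only [mulVec_sum, mulVec_smul, hev, smul_smul, mul_comm]
  have hyy : y ⬝ᵥ y = ∑ k, (v k ⬝ᵥ y) ^ 2 := by
    conv_lhs => arg 2; rw [← hexp]
    rw [dotProduct_sum]
    exact Finset.sum_congr rfl fun k _ => by rw [dotProduct_smul, dotProduct_comm, smul_eq_mul, sq]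
  have hyMy : y ⬝ᵥ M *ᵥ y = ∑ k, μ k * (v k ⬝ᵥ y) ^ 2 := by
    rw [hMy, dotProduct_sum]
    exact Finset.sum_congr rfl fun k _ => by
      rw [dotProduct_smul, dotProduct_comm, smul_eq_mul]; ring
  rw [hyy, hyMy, Finset.mul_sum]
  refine Finset.sum_le_sum fun k _ => ?_
  rcases hy k with hk | hk
  · exact mul_le_mul_of_nonneg_right hk (sq_nonneg _)
  · simp [hk]

end Eigenbasis

theorem second_eigenvalue_mul_le_of_orthogonal_first {n : ℕ} (hn : 1 < n)
    {M : Matrix (Fin n) (Fin n) ℝ} {μ : Fin n → ℝ} (hmono : Monotone μ) {v : Fin n → Fin n → ℝ}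
    (hv : ∀ k l, v k ⬝ᵥ v l = if k = l then (1 : ℝ) else 0)
    (hev : ∀ k, M *ᵥ v k = μ k • v k) {y : Fin n → ℝ} (hy : y ⬝ᵥ v ⟨0, by omega⟩ = 0) :
    μ ⟨1, hn⟩ * (y ⬝ᵥ y) ≤ y ⬝ᵥ M *ᵥ y :=
  le_dotProduct_mulVec_of_orthonormal_eigenvectors hv hev fun k => by
    rcases Nat.eq_zero_or_pos k with hk | hk
    · exact Or.inr (by rw [dotProduct_comm, show k = ⟨0, by omega⟩ from Fin.ext hk, hy])
    · exact Or.inl (hmono (Fin.mk_le_of_le_val hk))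

/-- The combination `(w ⬝ᵥ x) • u - (w ⬝ᵥ u) • x` is orthogonal to `w`, and the kernel vector `u`
adds to its squared norm but not to its quadratic form. -/
theorem le_dotProduct_mulVec_of_orthogonal_kernel_vector {ι : Type*} [Fintype ι]
    {M : Matrix ι ι ℝ} (hM : M.IsSymm) {u w x : ι → ℝ} {c : ℝ} (hc : 0 < c)
    (hMu : M *ᵥ u = 0) (hu : u ≠ 0) (hux : u ⬝ᵥ x = 0)
    (hw : ∀ y, y ⬝ᵥ w = 0 → c * (y ⬝ᵥ y) ≤ y ⬝ᵥ M *ᵥ y) :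
    c * (x ⬝ᵥ x) ≤ x ⬝ᵥ M *ᵥ x := by
  set a := w ⬝ᵥ x
  set b := w ⬝ᵥ u
  by_cases ha : a = 0
  · exact hw x (by rw [dotProduct_comm]; exact ha)
  have huMx : u ⬝ᵥ M *ᵥ x = 0 := by
    rw [dotProduct_mulVec, ← mulVec_transpose, hM.eq, hMu, zero_dotProduct]
  have huu : 0 < u ⬝ᵥ u :=
    lt_of_le_of_ne (Finset.sum_nonneg fun i _ => mul_self_nonneg (u i))
      (Ne.symm (dotProduct_self_eq_zero.not.mpr hu))
  have hbound := hw (a • u - b • x) (by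
    rw [dotProduct_comm, dotProduct_sub, dotProduct_smul, dotProduct_smul, smul_eq_mul,
      smul_eq_mul]
    ring)
  have hyy : (a • u - b • x) ⬝ᵥ (a • u - b • x) = a ^ 2 * (u ⬝ᵥ u) + b ^ 2 * (x ⬝ᵥ x) := by
    simp only [sub_dotProduct, dotProduct_sub, smul_dotProduct, dotProduct_smul, smul_eq_mul,
      dotProduct_comm x u, hux]
    ring
  have hyMy : (a • u - b • x) ⬝ᵥ M *ᵥ (a • u - b • x) = b ^ 2 * (x ⬝ᵥ M *ᵥ x) := by
    simp only [mulVec_sub, mulVec_smul, hMu, smul_zero, zero_sub, dotProduct_neg,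
      sub_dotProduct, smul_dotProduct, dotProduct_smul, smul_eq_mul, huMx]
    ring
  rw [hyy, hyMy] at hbound
  clear_value a b
  have hau : 0 < c * (a ^ 2 * (u ⬝ᵥ u)) := by have := sq_pos_of_ne_zero ha; positivity
  have hb : b ≠ 0 := by
    rintro rfl
    linarith
  have hbx : b ^ 2 * (c * (x ⬝ᵥ x)) ≤ b ^ 2 * (x ⬝ᵥ M *ᵥ x) := by linarith
  exact le_of_mul_le_mul_left hbx (sq_pos_of_ne_zero hb)

section Laplacian

variable {ι : Type*} [Fintype ι] [DecidableEq ι] {A : Matrix ι ι ℝ} {d : ι → ℝ}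

theorem laplacian_mulVec_one (hd : ∀ i, d i = ∑ j, A i j) : (diagonal d - A) *ᵥ 1 = 0 := by
  ext i
  rw [sub_mulVec, Pi.sub_apply, mulVec_diagonal, hd]
  simp [mulVec, dotProduct]

theorem dotProduct_laplacian_mulVec (g : ι → ℝ) :
    g ⬝ᵥ (diagonal d - A) *ᵥ g = ∑ i, d i * g i ^ 2 - ∑ i, ∑ j, A i j * g i * g j := by
  rw [sub_mulVec, dotProduct_sub]
  congr 1
  · simp only [dotProduct, mulVec_diagonal]
    exact Fintype.sum_congr _ _ fun i => by ring
  · simp only [dotProduct, mulVec, Finset.mul_sum]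
    exact Fintype.sum_congr _ _ fun i => Fintype.sum_congr _ _ fun j => by ring

theorem two_mul_dotProduct_laplacian_mulVec (hA : A.IsSymm) (hd : ∀ i, d i = ∑ j, A i j)
    (g : ι → ℝ) :
    2 * (g ⬝ᵥ (diagonal d - A) *ᵥ g) = ∑ i, ∑ j, A i j * (g i - g j) ^ 2 := by
  have hrow : ∑ i, d i * g i ^ 2 = ∑ i, ∑ j, A i j * g i ^ 2 := by
    simp only [hd, Finset.sum_mul]
  have hcol : ∑ i, d i * g i ^ 2 = ∑ i, ∑ j, A i j * g j ^ 2 := by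
    rw [hrow, Finset.sum_comm]
    exact Fintype.sum_congr _ _ fun i => Fintype.sum_congr _ _ fun j => by rw [hA.apply]
  rw [dotProduct_laplacian_mulVec, two_mul]
  nth_rewrite 1 [hrow]
  rw [hcol]
  simp only [← Finset.sum_add_distrib, ← Finset.sum_sub_distrib]
  exact Fintype.sum_congr _ _ fun i => Fintype.sum_congr _ _ fun j => by ring

theorem dotProduct_laplacian_mulVec_ite_mem (hA : A.IsSymm) (hd : ∀ i, d i = ∑ j, A i j)
    (P : Finset ι) (a b : ℝ) :
    (fun i => if i ∈ P then a else b) ⬝ᵥ (diagonal d - A) *ᵥ (fun i => if i ∈ P then a else b)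
      = (∑ i ∈ P, ∑ j ∈ Pᶜ, A i j) * (a - b) ^ 2 := by
  have hcut : ∑ i ∈ Pᶜ, ∑ j ∈ P, A i j = ∑ i ∈ P, ∑ j ∈ Pᶜ, A i j := by
    refine Finset.sum_comm.trans ?_
    exact Finset.sum_congr rfl fun i _ => Finset.sum_congr rfl fun j _ => (hA.apply j i).symm
  have h := two_mul_dotProduct_laplacian_mulVec hA hd (fun i => if i ∈ P then a else b)
  -- after splitting both sums along `P`, the diagonal blocks vanish and the other two agree
  simp only [← P.sum_add_sum_compl] at h
  have hout : ∀ i ∈ Pᶜ, (i ∈ P) = False := fun i hi => eq_false (Finset.mem_compl.mp hi)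
  simp (contextual := true) only [hout, ite_true, ite_false, sub_self, ne_eq,
    OfNat.ofNat_ne_zero, not_false_eq_true, zero_pow, mul_zero, Finset.sum_const_zero, add_zero,
    zero_add, ← Finset.sum_mul, hcut] at h
  linear_combination h / 2

end Laplacian

section DiagonalConj

variable {ι : Type*} [Fintype ι] {s d : ι → ℝ}

theorem dotProduct_mul_eq_sum (hss : ∀ i, s i * s i = d i) (g : ι → ℝ) :
    s ⬝ᵥ (s * g) = ∑ i, d i * g i := by
  simp only [dotProduct, Pi.mul_apply, ← mul_assoc, hss]

theorem mul_dotProduct_mul_self_eq_sum (hss : ∀ i, s i * s i = d i) (g : ι → ℝ) :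
    (s * g) ⬝ᵥ (s * g) = ∑ i, d i * g i ^ 2 := by
  simp only [dotProduct, Pi.mul_apply, ← hss]
  exact Fintype.sum_congr _ _ fun i => by ring

variable [DecidableEq ι]

theorem diagonal_inv_mulVec_mul (hs : ∀ i, s i ≠ 0) (g : ι → ℝ) :
    diagonal (fun i => (s i)⁻¹) *ᵥ (s * g) = g := by
  ext i
  rw [mulVec_diagonal, Pi.mul_apply, inv_mul_cancel_left₀ (hs i)]

theorem dotProduct_diagonal_inv_conj_mulVec (hs : ∀ i, s i ≠ 0) (L : Matrix ι ι ℝ)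
    (g : ι → ℝ) :
    (s * g) ⬝ᵥ (diagonal (fun i => (s i)⁻¹) * L * diagonal (fun i => (s i)⁻¹)) *ᵥ (s * g)
      = g ⬝ᵥ L *ᵥ g := by
  have hvec : (s * g) ᵥ* diagonal (fun i => (s i)⁻¹) = g := by
    rw [← mulVec_transpose, diagonal_transpose, diagonal_inv_mulVec_mul hs]
  rw [← mulVec_mulVec, ← mulVec_mulVec, diagonal_inv_mulVec_mul hs, dotProduct_mulVec, hvec]

theorem diagonal_inv_conj_mulVec_self {L : Matrix ι ι ℝ} (hs : ∀ i, s i ≠ 0)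
    (hL : L *ᵥ 1 = 0) :
    (diagonal (fun i => (s i)⁻¹) * L * diagonal (fun i => (s i)⁻¹)) *ᵥ s = 0 := by
  have hs1 := diagonal_inv_mulVec_mul hs 1
  rw [mul_one] at hs1
  rw [← mulVec_mulVec, ← mulVec_mulVec, hs1, hL, mulVec_zero]

theorem Matrix.IsSymm.diagonal_conj {L : Matrix ι ι ℝ} (hL : L.IsSymm) (t : ι → ℝ) :
    (diagonal t * L * diagonal t).IsSymm := by
  rw [IsSymm, transpose_mul, transpose_mul, diagonal_transpose, hL.eq, Matrix.mul_assoc]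

end DiagonalConj

section CutVector

variable {ι : Type*} [Fintype ι] [DecidableEq ι]

noncomputable def cutVector (w : ι → ℝ) (P : Finset ι) : ι → ℝ :=
  fun i => if i ∈ P then (∑ j ∈ P, w j)⁻¹ else -(∑ j ∈ Pᶜ, w j)⁻¹

theorem sum_mul_ite_mem (w : ι → ℝ) (P : Finset ι) (a b : ℝ) :
    ∑ i, w i * (if i ∈ P then a else b) = (∑ i ∈ P, w i) * a + (∑ i ∈ Pᶜ, w i) * b := by
  rw [← P.sum_add_sum_compl, Finset.sum_mul, Finset.sum_mul]
  congr 1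
  · exact Finset.sum_congr rfl fun i hi => by rw [if_pos hi]
  · exact Finset.sum_congr rfl fun i hi => by rw [if_neg (Finset.mem_compl.mp hi)]

variable {w : ι → ℝ} {P : Finset ι}

theorem sum_mul_cutVector (hr : ∑ i ∈ P, w i ≠ 0) (hl : ∑ i ∈ Pᶜ, w i ≠ 0) :
    ∑ i, w i * cutVector w P i = 0 := by
  simp only [cutVector]
  rw [sum_mul_ite_mem, mul_inv_cancel₀ hr, mul_neg, mul_inv_cancel₀ hl, add_neg_cancel]

theorem sum_mul_cutVector_sq (hr : ∑ i ∈ P, w i ≠ 0) (hl : ∑ i ∈ Pᶜ, w i ≠ 0) :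
    ∑ i, w i * cutVector w P i ^ 2 = (∑ i ∈ P, w i)⁻¹ + (∑ i ∈ Pᶜ, w i)⁻¹ := by
  simp only [cutVector, apply_ite (· ^ 2), sum_mul_ite_mem]
  field_simp

theorem dotProduct_laplacian_mulVec_cutVector {A : Matrix ι ι ℝ} (hA : A.IsSymm)
    (hw : ∀ i, w i = ∑ j, A i j) (P : Finset ι) :
    cutVector w P ⬝ᵥ (diagonal w - A) *ᵥ cutVector w P
      = (∑ i ∈ P, ∑ j ∈ Pᶜ, A i j) * ((∑ i ∈ P, w i)⁻¹ + (∑ i ∈ Pᶜ, w i)⁻¹) ^ 2 := by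
  unfold cutVector
  rw [dotProduct_laplacian_mulVec_ite_mem hA hw, sub_neg_eq_add]

end CutVector

/-- The algebraic connectivity (second smallest eigenvalue of the normalized Laplacian)
is a lower bound for the normalized cut objective of every bipartition. -/
theorem second_eigenvalue_le_ncut (n : ℕ) (hn : 2 ≤ n)
    (A : Matrix (Fin n) (Fin n) ℝ)
    (hsym : A.IsSymm) (hnn : ∀ i j, 0 ≤ A i j)
    (d : Fin n → ℝ) (hd : ∀ i, d i = ∑ j, A i j) (hdpos : ∀ i, 0 < d i)
    (Ls : Matrix (Fin n) (Fin n) ℝ)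
    (hLs : Ls = Matrix.diagonal (fun i => (Real.sqrt (d i))⁻¹) *
      (Matrix.diagonal d - A) * Matrix.diagonal (fun i => (Real.sqrt (d i))⁻¹))
    (μ : Fin n → ℝ) (hmono : Monotone μ)
    (v : Fin n → Fin n → ℝ)
    (hortho : ∀ k l, v k ⬝ᵥ v l = if k = l then (1 : ℝ) else 0)
    (hev : ∀ k, Ls.mulVec (v k) = μ k • v k) :
    ∀ P : Finset (Fin n), 0 < ∑ i ∈ P, d i → 0 < ∑ i ∈ Pᶜ, d i →
      μ ⟨1, by omega⟩ ≤
        (∑ i ∈ P, ∑ j ∈ Pᶜ, A i j) * (1 / ∑ i ∈ P, d i + 1 / ∑ i ∈ Pᶜ, d i) := by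
  intro P hvr hvl
  rcases le_or_gt (μ ⟨1, by omega⟩) 0 with hμ | hμ
  · exact hμ.trans (mul_nonneg (Finset.sum_nonneg fun i _ => Finset.sum_nonneg fun j _ =>
      hnn i j) (by positivity))
  set s : Fin n → ℝ := fun i => √(d i)
  have hs : ∀ i, s i ≠ 0 := fun i => (Real.sqrt_pos.mpr (hdpos i)).ne'
  have hss : ∀ i, s i * s i = d i := fun i => Real.mul_self_sqrt (hdpos i).le
  have hLs_symm : Ls.IsSymm := hLs ▸ ((isSymm_diagonal d).sub hsym).diagonal_conj _
  have hLs_s : Ls *ᵥ s = 0 := hLs ▸ diagonal_inv_conj_mulVec_self hs (laplacian_mulVec_one hd)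
  have hs_ne : s ≠ 0 := fun h => hs ⟨0, by omega⟩ (congrFun h _)
  have hsx : s ⬝ᵥ (s * cutVector d P) = 0 := by
    rw [dotProduct_mul_eq_sum hss, sum_mul_cutVector hvr.ne' hvl.ne']
  have hx := le_dotProduct_mulVec_of_orthogonal_kernel_vector hLs_symm hμ hLs_s hs_ne hsx
    fun y hy => second_eigenvalue_mul_le_of_orthogonal_first (by omega) hmono hortho hev hy
  rw [mul_dotProduct_mul_self_eq_sum hss, sum_mul_cutVector_sq hvr.ne' hvl.ne', hLs,
    dotProduct_diagonal_inv_conj_mulVec hs, dotProduct_laplacian_mulVec_cutVector hsym hd,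
    sq, ← mul_assoc] at hx
  rw [one_div, one_div]
  exact le_of_mul_le_mul_right hx (by positivity)
end
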